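/- Let M > 0, λ ≥ 0, δ₁ > 0, and τ̄₀ ∈ ℝ. Let v : ℝ² → ℝ be smooth on ℝ × (−δ₁, δ₁) and satisfy the λ-mode wave equation in outgoing coordinates near null infinity at every point (τ̄,ρ̄) with τ̄ ∈ ℝ and ρ̄ ∈ [0, δ₁). Assume: (i) ∂_τ̄ v(τ̄, 0) = 0 for all τ̄ ≤ τ̄₀; and (ii) there exists T ≤ τ̄₀ such that for every τ̄ ≤ T there is ρ̄′ > 0 with v(τ̄, ρ̄) = 0 for all ρ̄ ∈ [0, ρ̄′). Then v vanishes to infinite order at null infinity for τ̄ ≤ τ̄₀: for every k ∈ ℕ and every τ̄ ≤ τ̄₀, (∂_ρ̄^k v)(τ̄, 0) = 0. (Key step in the proof of Theorem 5.4.) -/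

import Mathlib

open MeasureTheory Filter Set Function
open scoped ContDiff

/-- The λ-mode wave equation in outgoing coordinates near null infinity, at the point
`(τ̄,ρ̄)`:
`2·∂_τ̄∂_ρ̄ v + (1−2Mρ̄)·(ρ̄²·∂²_ρ̄ v + ρ̄·∂_ρ̄ v) + (1−4Mρ̄)·ρ̄·∂_ρ̄ v − λ²·v − 2Mρ̄·v = 0`. -/
def NullInftyEqAt (M lam : ℝ) (v : ℝ → ℝ → ℝ) (τ ρ : ℝ) : Prop :=
  2 * deriv (fun s => deriv (fun p => v s p) ρ) τ
    + (1 - 2*M*ρ) * (ρ^2 * deriv (fun p => deriv (fun q => v τ q) p) ρ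
        + ρ * deriv (fun p => v τ p) ρ)
    + (1 - 4*M*ρ) * ρ * deriv (fun p => v τ p) ρ
    - lam^2 * v τ ρ - 2*M*ρ * v τ ρ = 0

/-! Write `w_k(τ̄) = ∂_ρ̄^k v(τ̄, 0)`. The coefficients of `∂²_ρ̄ v` and `∂_ρ̄ v` in the equation
vanish at `ρ̄ = 0` to orders two and one, so differentiating the equation `k` times in `ρ̄` at
`ρ̄ = 0` gives `2 ∂_τ̄ w_{k+1}` plus a linear combination of `w_0, …, w_k`. Hence, by induction
on `k`, if `w_0, …, w_k` vanish for `τ̄ ≤ τ̄₀`, then `w_{k+1}` is constant there; it vanishes for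
`τ̄ ≤ T` because `v` vanishes near null infinity in the far past. The hypothesis on the radiation
field `w_0` starts the induction. -/

noncomputable def partialFst (f : ℝ × ℝ → ℝ) (x : ℝ × ℝ) : ℝ := fderiv ℝ f x (1, 0)

noncomputable def partialSnd (f : ℝ × ℝ → ℝ) (x : ℝ × ℝ) : ℝ := fderiv ℝ f x (0, 1)

notation "∂₁" => partialFst
notation "∂₂" => partialSnd

theorem ContDiffOn.differentiableAt_of_isOpen {𝕜 E F : Type*} [NontriviallyNormedField 𝕜]
    [NormedAddCommGroup E] [NormedSpace 𝕜 E] [NormedAddCommGroup F] [NormedSpace 𝕜 F]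
    {U : Set E} {f : E → F} (hf : ContDiffOn 𝕜 ∞ f U) (hU : IsOpen U) {x : E} (hx : x ∈ U) :
    DifferentiableAt 𝕜 f x :=
  (hf.contDiffAt (hU.mem_nhds hx)).differentiableAt (by simp)

section PartialDerivatives

variable {U : Set (ℝ × ℝ)} {f g : ℝ × ℝ → ℝ}

theorem ContDiffOn.partialFst (hf : ContDiffOn ℝ ∞ f U) (hU : IsOpen U) :
    ContDiffOn ℝ ∞ (∂₁ f) U :=
  (hf.fderiv_of_isOpen hU le_rfl).clm_apply contDiffOn_const

theorem ContDiffOn.partialSnd (hf : ContDiffOn ℝ ∞ f U) (hU : IsOpen U) :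
    ContDiffOn ℝ ∞ (∂₂ f) U :=
  (hf.fderiv_of_isOpen hU le_rfl).clm_apply contDiffOn_const

theorem ContDiffOn.iterate_partialSnd (hf : ContDiffOn ℝ ∞ f U) (hU : IsOpen U) (k : ℕ) :
    ContDiffOn ℝ ∞ (∂₂^[k] f) U := by
  induction k generalizing f with
  | zero => exact hf
  | succ k ih => exact ih (hf.partialSnd hU)

theorem hasDerivAt_partialFst {τ ρ : ℝ} (hf : DifferentiableAt ℝ f (τ, ρ)) :
    HasDerivAt (fun s => f (s, ρ)) (∂₁ f (τ, ρ)) τ :=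
  hf.hasFDerivAt.comp_hasDerivAt τ ((hasDerivAt_id τ).prodMk (hasDerivAt_const τ ρ))

theorem hasDerivAt_partialSnd {τ ρ : ℝ} (hf : DifferentiableAt ℝ f (τ, ρ)) :
    HasDerivAt (fun p => f (τ, p)) (∂₂ f (τ, ρ)) ρ :=
  hf.hasFDerivAt.comp_hasDerivAt ρ ((hasDerivAt_const ρ τ).prodMk (hasDerivAt_id ρ))

theorem iterate_partialSnd_congr (hU : IsOpen U) (h : EqOn f g U) (k : ℕ) :
    EqOn (∂₂^[k] f) (∂₂^[k] g) U := by
  induction k generalizing f g with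
  | zero => exact h
  | succ k ih =>
    refine ih fun x hx => ?_
    simp only [partialSnd, (eventuallyEq_of_mem (hU.mem_nhds hx) h).fderiv_eq]

theorem iterate_partialSnd_add (hU : IsOpen U) (hf : ContDiffOn ℝ ∞ f U)
    (hg : ContDiffOn ℝ ∞ g U) (k : ℕ) {x : ℝ × ℝ} (hx : x ∈ U) :
    ∂₂^[k] (fun y => f y + g y) x = ∂₂^[k] f x + ∂₂^[k] g x := by
  induction k generalizing f g with
  | zero => rfl
  | succ k ih =>
    have hadd : EqOn (∂₂ (fun y => f y + g y)) (fun y => ∂₂ f y + ∂₂ g y) U := fun y hy => by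
      simp [partialSnd, fderiv_fun_add (hf.differentiableAt_of_isOpen hU hy)
        (hg.differentiableAt_of_isOpen hU hy)]
    rw [Function.iterate_succ_apply, iterate_partialSnd_congr hU hadd k hx,
      ih (hf.partialSnd hU) (hg.partialSnd hU)]
    rfl

theorem iterate_partialSnd_const_mul (hU : IsOpen U) (hf : ContDiffOn ℝ ∞ f U) (c : ℝ) (k : ℕ)
    {x : ℝ × ℝ} (hx : x ∈ U) : ∂₂^[k] (fun y => c * f y) x = c * ∂₂^[k] f x := by
  induction k generalizing f with
  | zero => rfl
  | succ k ih =>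
    have hmul : EqOn (∂₂ (fun y => c * f y)) (fun y => c * ∂₂ f y) U := fun y hy => by
      simp [partialSnd, fderiv_const_mul (hf.differentiableAt_of_isOpen hU hy) c]
    rw [Function.iterate_succ_apply, iterate_partialSnd_congr hU hmul k hx,
      ih (hf.partialSnd hU)]
    rfl

theorem partialSnd_partialFst (hU : IsOpen U) (hf : ContDiffOn ℝ ∞ f U) :
    EqOn (∂₂ (∂₁ f)) (∂₁ (∂₂ f)) U := by
  intro x hx
  have hd : DifferentiableAt ℝ (fderiv ℝ f) x :=
    (hf.fderiv_of_isOpen hU (m := ∞) le_rfl).differentiableAt_of_isOpen hU hx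
  have happly (w : ℝ × ℝ) :
      fderiv ℝ (fun y => fderiv ℝ f y w) x = (fderiv ℝ (fderiv ℝ f) x).flip w := by
    rw [fderiv_clm_apply hd (differentiableAt_const _)]
    simp
  change fderiv ℝ (fun y => fderiv ℝ f y (1, 0)) x (0, 1)
      = fderiv ℝ (fun y => fderiv ℝ f y (0, 1)) x (1, 0)
  rw [happly, happly]
  exact (hf.contDiffAt (hU.mem_nhds hx)).isSymmSndFDerivAt
    (by simpa using (WithTop.coe_le_coe.2 le_top : (2 : WithTop ℕ∞) ≤ ∞)) (0, 1) (1, 0)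

theorem iterate_partialSnd_partialFst (hU : IsOpen U) (hf : ContDiffOn ℝ ∞ f U) (k : ℕ) :
    EqOn (∂₂^[k] (∂₁ f)) (∂₁ (∂₂^[k] f)) U := by
  induction k generalizing f with
  | zero => exact fun _ _ => rfl
  | succ k ih =>
    intro x hx
    rw [Function.iterate_succ_apply, iterate_partialSnd_congr hU (partialSnd_partialFst hU hf) k hx,
      ih (hf.partialSnd hU) hx, ← Function.iterate_succ_apply]

theorem partialSnd_snd_mul (hU : IsOpen U) (hf : ContDiffOn ℝ ∞ f U) :
    EqOn (∂₂ (fun y => y.2 * f y)) (fun y => f y + y.2 * ∂₂ f y) U := by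
  intro x hx
  change fderiv ℝ (fun y : ℝ × ℝ => y.2 * f y) x (0, 1) = _
  rw [(hasFDerivAt_snd.fun_mul (hf.differentiableAt_of_isOpen hU hx).hasFDerivAt).fderiv]
  simp [partialSnd]
  ring

theorem iteratedDeriv_eq_iterate_partialSnd (hU : IsOpen U) (hf : ContDiffOn ℝ ∞ f U)
    {τ ρ : ℝ} (hx : (τ, ρ) ∈ U) (k : ℕ) :
    iteratedDeriv k (fun p => f (τ, p)) ρ = ∂₂^[k] f (τ, ρ) := by
  induction k generalizing ρ with
  | zero => rfl
  | succ k ih =>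
    have hslice : IsOpen {p : ℝ | (τ, p) ∈ U} := hU.preimage (by fun_prop)
    rw [iteratedDeriv_succ, Function.iterate_succ_apply',
      (eventuallyEq_of_mem (hslice.mem_nhds hx) fun p hp => ih hp).deriv_eq]
    exact (hasDerivAt_partialSnd
      ((hf.iterate_partialSnd hU k).differentiableAt_of_isOpen hU hx)).deriv

end PartialDerivatives

theorem iteratedDeriv_eq_zero_of_eqOn_Ico {E : Type*} [NormedAddCommGroup E] [NormedSpace ℝ E]
    {F : ℝ → E} {a b : ℝ} (hab : a < b) (k : ℕ) (hF : ContDiffAt ℝ k F a)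
    (h : EqOn F 0 (Ico a b)) : iteratedDeriv k F a = 0 := by
  have ha : a ∈ Ico a b := ⟨le_rfl, hab⟩
  rw [← iteratedDerivWithin_eq_iteratedDeriv (uniqueDiffOn_Ico a b) hF ha,
    iteratedDerivWithin_congr h ha]
  simp [Pi.zero_def]

theorem iterate_partialSnd_eq_zero_of_eqOn_Ico {U : Set (ℝ × ℝ)} {f : ℝ × ℝ → ℝ}
    (hU : IsOpen U) (hf : ContDiffOn ℝ ∞ f U) {τ r : ℝ} (hx : (τ, 0) ∈ U) (hr : 0 < r)
    (h : ∀ ρ ∈ Ico 0 r, f (τ, ρ) = 0) (k : ℕ) : ∂₂^[k] f (τ, 0) = 0 := by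
  have hslice : ContDiffAt ℝ k (fun p => f (τ, p)) 0 :=
    ((hf.contDiffAt (hU.mem_nhds hx)).comp 0 (by fun_prop)).of_le (mod_cast le_top)
  rw [← iteratedDeriv_eq_iterate_partialSnd hU hf hx]
  exact iteratedDeriv_eq_zero_of_eqOn_Ico hr k hslice h

theorem eq_zero_of_hasDerivAt_zero_of_eq_zero_Iic {g : ℝ → ℝ} {T τ₀ : ℝ}
    (hd : ∀ τ ≤ τ₀, HasDerivAt g 0 τ) (hpast : ∀ τ ≤ T, g τ = 0) : ∀ τ ≤ τ₀, g τ = 0 := by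
  intro τ hτ
  rcases le_total τ T with hτT | hTτ
  · exact hpast τ hτT
  have hconst := constant_of_has_deriv_right_zero
    (fun x hx => (hd x (hx.2.trans hτ)).continuousAt.continuousWithinAt)
    (fun x hx => (hd x (hx.2.le.trans hτ)).hasDerivWithinAt) τ ⟨hTτ, le_rfl⟩
  rw [hconst, hpast T le_rfl]

def VanishesToOrderSnd (n : ℕ) (f : ℝ × ℝ → ℝ) (x : ℝ × ℝ) : Prop :=
  ∀ j < n, ∂₂^[j] f x = 0

namespace VanishesToOrderSnd

variable {U : Set (ℝ × ℝ)} {f g : ℝ × ℝ → ℝ} {x : ℝ × ℝ} {m n : ℕ}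

theorem zero : VanishesToOrderSnd 0 f x := fun _ hj => absurd hj (Nat.not_lt_zero _)

theorem succ (hf : VanishesToOrderSnd n f x) (hn : ∂₂^[n] f x = 0) :
    VanishesToOrderSnd (n + 1) f x := fun j hj => by
  rcases Nat.lt_succ_iff_lt_or_eq.1 hj with hj | rfl
  exacts [hf j hj, hn]

theorem mono (hf : VanishesToOrderSnd n f x) (hmn : m ≤ n) : VanishesToOrderSnd m f x :=
  fun j hj => hf j (hj.trans_le hmn)

theorem partialSnd (hf : VanishesToOrderSnd n f x) : VanishesToOrderSnd (n - 1) (∂₂ f) x :=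
  fun j hj => hf (j + 1) (by omega)

theorem add (hU : IsOpen U) (hx : x ∈ U) (hf' : ContDiffOn ℝ ∞ f U) (hg' : ContDiffOn ℝ ∞ g U)
    (hf : VanishesToOrderSnd n f x) (hg : VanishesToOrderSnd n g x) :
    VanishesToOrderSnd n (fun y => f y + g y) x := fun j hj => by
  rw [iterate_partialSnd_add hU hf' hg' j hx, hf j hj, hg j hj, add_zero]

theorem const_mul (hU : IsOpen U) (hx : x ∈ U) (hf' : ContDiffOn ℝ ∞ f U)
    (hf : VanishesToOrderSnd n f x) (c : ℝ) : VanishesToOrderSnd n (fun y => c * f y) x :=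
  fun j hj => by rw [iterate_partialSnd_const_mul hU hf' c j hx, hf j hj, mul_zero]

theorem snd_mul (hU : IsOpen U) (hx : x ∈ U) (hx₂ : x.2 = 0) (hf' : ContDiffOn ℝ ∞ f U)
    (hf : VanishesToOrderSnd n f x) : VanishesToOrderSnd (n + 1) (fun y => y.2 * f y) x := by
  induction n generalizing f with
  | zero => rintro (_ | j) hj <;> simp_all
  | succ n ih =>
    rintro (_ | j) hj
    · simp [hx₂]
    rw [Function.iterate_succ_apply, iterate_partialSnd_congr hU (partialSnd_snd_mul hU hf') j hx]
    have h₁ := hf'.partialSnd hU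
    exact hf.add hU hx hf' (contDiffOn_snd.mul h₁) (ih h₁ hf.partialSnd) j (by omega)

end VanishesToOrderSnd

/-- The terms of `NullInftyEqAt` other than `2 ∂_τ̄ ∂_ρ̄ v`, expanded in powers of `ρ̄`. -/
noncomputable def nullInftyRadialOp (M lam : ℝ) (F : ℝ × ℝ → ℝ) (y : ℝ × ℝ) : ℝ :=
  y.2 * (y.2 * ∂₂ (∂₂ F) y) + -2 * M * (y.2 * (y.2 * (y.2 * ∂₂ (∂₂ F) y)))
    + 2 * (y.2 * ∂₂ F y) + -6 * M * (y.2 * (y.2 * ∂₂ F y))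
    + -lam ^ 2 * F y + -2 * M * (y.2 * F y)

section NullInftyOperator

variable {U : Set (ℝ × ℝ)} {F : ℝ × ℝ → ℝ} (M lam : ℝ)

theorem contDiffOn_nullInftyRadialOp (hU : IsOpen U) (hF : ContDiffOn ℝ ∞ F U) :
    ContDiffOn ℝ ∞ (nullInftyRadialOp M lam F) U := by
  have h₁ := hF.partialSnd hU
  have h₂ := h₁.partialSnd hU
  unfold nullInftyRadialOp
  fun_prop

theorem contDiffOn_nullInftyOp (hU : IsOpen U) (hF : ContDiffOn ℝ ∞ F U) :
    ContDiffOn ℝ ∞ (fun y => 2 * ∂₁ (∂₂ F) y + nullInftyRadialOp M lam F y) U :=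
  (contDiffOn_const.mul ((hF.partialSnd hU).partialFst hU)).add
    (contDiffOn_nullInftyRadialOp M lam hU hF)

theorem nullInftyEqAt_iff {v : ℝ → ℝ → ℝ} (hU : IsOpen U) (hv : ContDiffOn ℝ ∞ (uncurry v) U)
    {τ ρ : ℝ} (hx : (τ, ρ) ∈ U) :
    NullInftyEqAt M lam v τ ρ ↔
      2 * ∂₁ (∂₂ (uncurry v)) (τ, ρ) + nullInftyRadialOp M lam (uncurry v) (τ, ρ) = 0 := by
  have hslice : IsOpen {s : ℝ | (s, ρ) ∈ U} := hU.preimage (by fun_prop)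
  have hmixed : deriv (fun s => deriv (fun p => v s p) ρ) τ = ∂₁ (∂₂ (uncurry v)) (τ, ρ) := by
    have hρ : ∀ s ∈ {s : ℝ | (s, ρ) ∈ U}, deriv (fun p => v s p) ρ = ∂₂ (uncurry v) (s, ρ) :=
      fun s hs => (hasDerivAt_partialSnd (hv.differentiableAt_of_isOpen hU hs)).deriv
    rw [(eventuallyEq_of_mem (hslice.mem_nhds hx) hρ).deriv_eq]
    exact (hasDerivAt_partialFst ((hv.partialSnd hU).differentiableAt_of_isOpen hU hx)).deriv
  have hsnd₁ := iteratedDeriv_eq_iterate_partialSnd hU hv hx 1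
  have hsnd₂ := iteratedDeriv_eq_iterate_partialSnd hU hv hx 2
  simp only [iteratedDeriv_succ, iteratedDeriv_zero, uncurry_apply_pair,
    Function.iterate_succ_apply', Function.iterate_zero_apply] at hsnd₁ hsnd₂
  unfold NullInftyEqAt nullInftyRadialOp
  rw [hmixed, hsnd₁, hsnd₂, uncurry_apply_pair]
  constructor <;> intro h <;> linear_combination h

theorem VanishesToOrderSnd.nullInftyRadialOp {x : ℝ × ℝ} {n : ℕ} (hU : IsOpen U) (hx : x ∈ U)
    (hx₂ : x.2 = 0) (hF' : ContDiffOn ℝ ∞ F U) (hF : VanishesToOrderSnd (n + 1) F x) :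
    VanishesToOrderSnd (n + 1) (nullInftyRadialOp M lam F) x := by
  have h₁ := hF'.partialSnd hU
  have h₂ := h₁.partialSnd hU
  have hρρF₂ : VanishesToOrderSnd (n + 1) (fun y => y.2 * (y.2 * ∂₂ (∂₂ F) y)) x :=
    ((hF.partialSnd.partialSnd.snd_mul hU hx hx₂ h₂).snd_mul hU hx hx₂ (by fun_prop)).mono
      (by omega)
  have hρρρF₂ : VanishesToOrderSnd (n + 1) (fun y => y.2 * (y.2 * (y.2 * ∂₂ (∂₂ F) y))) x :=
    (hρρF₂.snd_mul hU hx hx₂ (by fun_prop)).mono (by omega)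
  have hρF₁ : VanishesToOrderSnd (n + 1) (fun y => y.2 * ∂₂ F y) x :=
    (hF.partialSnd.snd_mul hU hx hx₂ h₁).mono (by omega)
  have hρρF₁ : VanishesToOrderSnd (n + 1) (fun y => y.2 * (y.2 * ∂₂ F y)) x :=
    (hρF₁.snd_mul hU hx hx₂ (by fun_prop)).mono (by omega)
  have hρF : VanishesToOrderSnd (n + 1) (fun y => y.2 * F y) x :=
    (hF.snd_mul hU hx hx₂ hF').mono (by omega)
  refine (((((hρρF₂.add hU hx ?_ ?_ (hρρρF₂.const_mul hU hx ?_ _)).add hU hx ?_ ?_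
    (hρF₁.const_mul hU hx ?_ _)).add hU hx ?_ ?_ (hρρF₁.const_mul hU hx ?_ _)).add hU hx ?_ ?_
    (hF.const_mul hU hx hF' _)).add hU hx ?_ ?_ (hρF.const_mul hU hx ?_ _))
  all_goals fun_prop

theorem partialFst_iterate_partialSnd_succ_eq_zero {x : ℝ × ℝ} {n : ℕ} (hU : IsOpen U)
    (hx : x ∈ U) (hx₂ : x.2 = 0) (hF' : ContDiffOn ℝ ∞ F U) (hF : VanishesToOrderSnd (n + 1) F x)
    (hop : ∂₂^[n] (fun y => 2 * ∂₁ (∂₂ F) y + nullInftyRadialOp M lam F y) x = 0) :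
    ∂₁ (∂₂^[n + 1] F) x = 0 := by
  have h₁ := hF'.partialSnd hU
  rw [iterate_partialSnd_add hU (contDiffOn_const.mul (h₁.partialFst hU))
      (contDiffOn_nullInftyRadialOp M lam hU hF') n hx,
    iterate_partialSnd_const_mul hU (h₁.partialFst hU) 2 n hx,
    iterate_partialSnd_partialFst hU h₁ n hx,
    hF.nullInftyRadialOp M lam hU hx hx₂ hF' n n.lt_succ_self,
    add_zero, ← Function.iterate_succ_apply] at hop
  simpa using hop

theorem vanishesToOrderSnd_of_transport {τ₀ T : ℝ} (hU : IsOpen U)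
    (haxis : ∀ σ : ℝ, (σ, 0) ∈ U) (hF : ContDiffOn ℝ ∞ F U)
    (hop : ∀ (n : ℕ), ∀ σ ≤ τ₀,
      ∂₂^[n] (fun y => 2 * ∂₁ (∂₂ F) y + nullInftyRadialOp M lam F y) (σ, 0) = 0)
    (hradiation : ∀ σ ≤ τ₀, ∂₁ F (σ, 0) = 0) (hpast : ∀ (n : ℕ), ∀ σ ≤ T, ∂₂^[n] F (σ, 0) = 0)
    (n : ℕ) : ∀ σ ≤ τ₀, VanishesToOrderSnd n F (σ, 0) := by
  induction n with
  | zero => exact fun _ _ => .zero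
  | succ n ih =>
    have htransport : ∀ σ ≤ τ₀, ∂₁ (∂₂^[n] F) (σ, 0) = 0 := by
      rcases n with _ | n
      · exact hradiation
      · exact fun σ hσ => partialFst_iterate_partialSnd_succ_eq_zero M lam hU (haxis σ) rfl hF
          (ih σ hσ) (hop n σ hσ)
    have hderiv : ∀ σ ≤ τ₀, HasDerivAt (fun s => ∂₂^[n] F (s, 0)) 0 σ := fun σ hσ =>
      (hasDerivAt_partialFst ((hF.iterate_partialSnd hU n).differentiableAt_of_isOpen hU
        (haxis σ))).congr_deriv (htransport σ hσ)
    exact fun σ hσ =>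
      (ih σ hσ).succ (eq_zero_of_hasDerivAt_zero_of_eq_zero_Iic hderiv (hpast n) σ hσ)

end NullInftyOperator

theorem infinite_order_vanishing_at_null_infinity
    (M lam δ₁ τ₀ : ℝ) (hδ₁ : 0 < δ₁)
    (v : ℝ → ℝ → ℝ)
    (hv : ContDiffOn ℝ ∞ (Function.uncurry v) ((Set.univ : Set ℝ) ×ˢ Set.Ioo (-δ₁) δ₁))
    (heq : ∀ τ ρ : ℝ, ρ ∈ Set.Ico 0 δ₁ → NullInftyEqAt M lam v τ ρ)
    (h1 : ∀ τ : ℝ, τ ≤ τ₀ → deriv (fun s => v s 0) τ = 0)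
    (h2 : ∃ T : ℝ, T ≤ τ₀ ∧ ∀ τ : ℝ, τ ≤ T → ∃ ρ' : ℝ, 0 < ρ' ∧
      ∀ ρ ∈ Set.Ico (0:ℝ) ρ', v τ ρ = 0) :
    ∀ k : ℕ, ∀ τ : ℝ, τ ≤ τ₀ → iteratedDeriv k (fun ρ => v τ ρ) 0 = 0 := by
  obtain ⟨T, -, hpast⟩ := h2
  have hU : IsOpen ((univ : Set ℝ) ×ˢ Ioo (-δ₁) δ₁) := isOpen_univ.prod isOpen_Ioo
  have hmem (σ : ℝ) {ρ : ℝ} (hρ : ρ ∈ Ico 0 δ₁) : (σ, ρ) ∈ (univ : Set ℝ) ×ˢ Ioo (-δ₁) δ₁ :=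
    ⟨mem_univ σ, by linarith [hρ.1], hρ.2⟩
  have haxis (σ : ℝ) := hmem σ ⟨le_rfl, hδ₁⟩
  have hop (n : ℕ) (σ : ℝ) (_ : σ ≤ τ₀) : ∂₂^[n] (fun y => 2 * ∂₁ (∂₂ (uncurry v)) y
      + nullInftyRadialOp M lam (uncurry v) y) (σ, 0) = 0 :=
    iterate_partialSnd_eq_zero_of_eqOn_Ico hU (contDiffOn_nullInftyOp M lam hU hv) (haxis σ) hδ₁
      (fun ρ hρ => (nullInftyEqAt_iff M lam hU hv (hmem σ hρ)).1 (heq σ ρ hρ)) n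
  have hradiation (σ : ℝ) (hσ : σ ≤ τ₀) : ∂₁ (uncurry v) (σ, 0) = 0 :=
    (hasDerivAt_partialFst (hv.differentiableAt_of_isOpen hU (haxis σ))).deriv.symm.trans (h1 σ hσ)
  have hpast' (n : ℕ) (σ : ℝ) (hσ : σ ≤ T) : ∂₂^[n] (uncurry v) (σ, 0) = 0 := by
    obtain ⟨ρ', hρ', hvanish⟩ := hpast σ hσ
    exact iterate_partialSnd_eq_zero_of_eqOn_Ico hU hv (haxis σ) hρ' hvanish n
  intro k τ hτ
  exact (iteratedDeriv_eq_iterate_partialSnd hU hv (haxis τ) k).trans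
    (vanishesToOrderSnd_of_transport M lam hU haxis hv hop hradiation hpast' (k + 1) τ hτ k
      k.lt_succ_self)
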